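/- (Fixed-point property of feedback loops) Let Ψ1 : Y2 × U1 ⇉ Y1 and Ψ2 : Y1 × U2 ⇉ Y2, D = U1 × U2, and let Ψ, Υ1, Υ2, Γ_{ij}^n be defined as for the feedback interconnection. Then for every subset A ⊆ D, every y1 ∈ Υ1(A), and every n ≥ 1, it holds that y1 ∈ Γ12^n(y1, A) (and symmetrically y2 ∈ Γ21^n(y2, A) for y2 ∈ Υ2(A)). -/

import Mathlib

open Set

def IsFilterFam {X : Type*} (F : Set (Set X)) : Prop :=
  F.Nonempty ∧ (∀ A B : Set X, A ∈ F → A ⊆ B → B ∈ F) ∧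
    (∀ A B : Set X, A ∈ F → B ∈ F → A ∩ B ∈ F)

def IsIdealFam {X : Type*} (I : Set (Set X)) : Prop :=
  I.Nonempty ∧ (∀ A B : Set X, A ∈ I → B ⊆ A → B ∈ I) ∧
    (∀ A B : Set X, A ∈ I → B ∈ I → A ∪ B ∈ I)

def downcl {X : Type*} (C : Set (Set X)) : Set (Set X) := {S | ∃ B ∈ C, S ⊆ B}

def upcl {X : Type*} (C : Set (Set X)) : Set (Set X) := {S | ∃ B ∈ C, B ⊆ S}

def otimes {X Y : Type*} (C1 : Set (Set X)) (C2 : Set (Set Y)) : Set (Set (X × Y)) :=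
  {S | ∃ A ∈ C1, ∃ B ∈ C2, S = A ×ˢ B}

def img {D Y : Type*} (Ψ : D → Set Y) (S : Set D) : Set Y := ⋃ d ∈ S, Ψ d

def uinv {D Y : Type*} (Ψ : D → Set Y) (V : Set Y) : Set D := {d | Ψ d ⊆ V}

def nbds {X : Type*} [TopologicalSpace X] (S : Set X) : Set (Set X) :=
  {N | ∃ O : Set X, IsOpen O ∧ S ⊆ O ∧ O ⊆ N}

variable {Y1 Y2 U1 U2 : Type*}

def fb (Ψ1 : Y2 × U1 → Set Y1) (Ψ2 : Y1 × U2 → Set Y2) (d : U1 × U2) :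
    Set (Y1 × Y2) :=
  {y | y.1 ∈ Ψ1 (y.2, d.1) ∧ y.2 ∈ Ψ2 (y.1, d.2)}

def Ups1 (Ψ1 : Y2 × U1 → Set Y1) (Ψ2 : Y1 × U2 → Set Y2) (A : Set (U1 × U2)) :
    Set Y1 :=
  {y1 | ∃ d ∈ A, ∃ y2, (y1, y2) ∈ fb Ψ1 Ψ2 d}

def Ups2 (Ψ1 : Y2 × U1 → Set Y1) (Ψ2 : Y1 × U2 → Set Y2) (A : Set (U1 × U2)) :
    Set Y2 :=
  {y2 | ∃ d ∈ A, ∃ y1, (y1, y2) ∈ fb Ψ1 Ψ2 d}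

def Gam12 (Ψ1 : Y2 × U1 → Set Y1) (Ψ2 : Y1 × U2 → Set Y2)
    (y1 : Y1) (d : U1 × U2) : Set Y1 :=
  ⋃ y2 ∈ Ψ2 (y1, d.2), Ψ1 (y2, d.1)

def Gam21 (Ψ1 : Y2 × U1 → Set Y1) (Ψ2 : Y1 × U2 → Set Y2)
    (y2 : Y2) (d : U1 × U2) : Set Y2 :=
  ⋃ y1 ∈ Ψ1 (y2, d.1), Ψ2 (y1, d.2)

def gpow {Y P : Type*} (Γ : Y → P → Set Y) : ℕ → Y → P → Set Y
  | 0, y, _ => {y}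
  | n + 1, y, d => ⋃ z ∈ gpow Γ n y d, Γ z d

def gpowSet {Y U1 U2 : Type*} (Γ : Y → U1 × U2 → Set Y) (n : ℕ) (y : Y)
    (A : Set (U1 × U2)) : Set Y :=
  ⋃ d ∈ A, gpow Γ n y d

theorem mem_gpow_of_mem_self {Y P : Type*} {Γ : Y → P → Set Y} {y : Y} {d : P}
    (h : y ∈ Γ y d) : ∀ n, y ∈ gpow Γ n y d
  | 0 => rfl
  | n + 1 => mem_biUnion (mem_gpow_of_mem_self h n) h

theorem mem_gpowSet_of_mem_self {Y U1 U2 : Type*} {Γ : Y → U1 × U2 → Set Y} {y : Y}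
    {A : Set (U1 × U2)} {d : U1 × U2} (hd : d ∈ A) (h : y ∈ Γ y d) (n : ℕ) :
    y ∈ gpowSet Γ n y A :=
  mem_biUnion hd (mem_gpow_of_mem_self h n)

theorem fst_mem_Gam12_of_mem_fb {Ψ1 : Y2 × U1 → Set Y1} {Ψ2 : Y1 × U2 → Set Y2}
    {d : U1 × U2} {y : Y1 × Y2} (hy : y ∈ fb Ψ1 Ψ2 d) : y.1 ∈ Gam12 Ψ1 Ψ2 y.1 d :=
  mem_biUnion hy.2 hy.1

theorem snd_mem_Gam21_of_mem_fb {Ψ1 : Y2 × U1 → Set Y1} {Ψ2 : Y1 × U2 → Set Y2}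
    {d : U1 × U2} {y : Y1 × Y2} (hy : y ∈ fb Ψ1 Ψ2 d) : y.2 ∈ Gam21 Ψ1 Ψ2 y.2 d :=
  mem_biUnion hy.1 hy.2

theorem stmt19 (Ψ1 : Y2 × U1 → Set Y1) (Ψ2 : Y1 × U2 → Set Y2)
    (A : Set (U1 × U2)) :
    (∀ y1 ∈ Ups1 Ψ1 Ψ2 A, ∀ n ≥ 1, y1 ∈ gpowSet (Gam12 Ψ1 Ψ2) n y1 A) ∧
    (∀ y2 ∈ Ups2 Ψ1 Ψ2 A, ∀ n ≥ 1, y2 ∈ gpowSet (Gam21 Ψ1 Ψ2) n y2 A) := by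
  constructor
  · rintro y1 ⟨d, hd, y2, hy⟩ n -
    exact mem_gpowSet_of_mem_self hd (fst_mem_Gam12_of_mem_fb hy) n
  · rintro y2 ⟨d, hd, y1, hy⟩ n -
    exact mem_gpowSet_of_mem_self hd (snd_mem_Gam21_of_mem_fb hy) n
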